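/- arXiv:2003.14233 — 2 statements merged into one kernel-verified Lean document; each statement's English description precedes it below -/
import Mathlib

section
/- For every t ≥ 4, the graph obtained from the complete bipartite graph K_{t−1,t−1} by deleting a perfect matching (equivalently, the induced subgraph of B_t obtained by deleting its two vertices of degree t) has b-chromatic number exactly t − 1. -/
open SimpleGraph

/-- The degree of a vertex `v` in a simple graph `G`. -/
noncomputable def vdeg {V : Type*} (G : SimpleGraph V) (v : V) : ℕ :=
  Nat.card {w // G.Adj v w}

/-- A Grundy coloring of `G` with `k` colors: a proper coloring whose `k` color classes are
all nonempty (surjectivity) and such that every vertex of a class has a neighbor in every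
smaller-indexed class. -/
def IsGrundyColoring {V : Type*} (G : SimpleGraph V) {k : ℕ} (C : V → Fin k) : Prop :=
  (∀ v w, G.Adj v w → C v ≠ C w) ∧
  Function.Surjective C ∧
  (∀ v : V, ∀ i : Fin k, i < C v → ∃ w, G.Adj v w ∧ C w = i)

/-- The Grundy number of `G`: the largest `k` admitting a Grundy coloring with `k` colors. -/
noncomputable def grundyNum {V : Type*} (G : SimpleGraph V) : ℕ :=
  sSup {k | ∃ C : V → Fin k, IsGrundyColoring G C}

/-- A b-coloring of `G` with `k` colors: a proper coloring such that every color class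
contains a vertex having a neighbor in each of the other classes (hence all classes are
nonempty). -/
def IsBColoring {V : Type*} (G : SimpleGraph V) {k : ℕ} (C : V → Fin k) : Prop :=
  (∀ v w, G.Adj v w → C v ≠ C w) ∧
  (∀ i : Fin k, ∃ v, C v = i ∧ ∀ j : Fin k, j ≠ i → ∃ w, G.Adj v w ∧ C w = j)

/-- The b-chromatic number of `G`: the largest `k` admitting a b-coloring with `k` colors. -/
noncomputable def bChrom {V : Type*} (G : SimpleGraph V) : ℕ :=
  sSup {k | ∃ C : V → Fin k, IsBColoring G C}

/-- The crown graph: the complete bipartite graph `K_{n,n}` minus a perfect matching;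
`Sum.inl i` is adjacent to `Sum.inr j` iff `i ≠ j`. -/
def crownGraph (n : ℕ) : SimpleGraph (Fin n ⊕ Fin n) :=
  SimpleGraph.fromRel (fun a b =>
    match a, b with
    | Sum.inl i, Sum.inr j => i ≠ j
    | _, _ => False)

/-!
A b-coloring with `k` colors has a vertex adjacent to all other `k - 1` colors, so `k` is at most
the maximum degree plus one; in the crown graph on `Fin n ⊕ Fin n` every vertex has degree
`n - 1`. Conversely, giving both `Sum.inl i` and `Sum.inr i` the color `i` is a b-coloring with
`n` colors in which every vertex is a b-vertex.
-/

namespace IsBColoring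

variable {V : Type*} {G : SimpleGraph V} {k : ℕ} {C : V → Fin k}

/-- The b-vertex of color `i` sees the other `k - 1` colors among its neighbors. -/
lemma exists_le_vdeg_add_one [G.LocallyFinite] (hC : IsBColoring G C) (i : Fin k) :
    ∃ v, C v = i ∧ k ≤ vdeg G v + 1 := by
  obtain ⟨v, rfl, hv⟩ := hC.2 i
  have : Finite {w // G.Adj v w} := inferInstanceAs (Finite (G.neighborSet v))
  let f : {w // G.Adj v w} → {j : Fin k // j ≠ C v} := fun w => ⟨C w, (hC.1 v w w.2).symm⟩
  have hf : Function.Surjective f := fun ⟨j, hj⟩ => by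
    obtain ⟨w, hvw, rfl⟩ := hv j hj
    exact ⟨⟨w, hvw⟩, rfl⟩
  have hcard : k - 1 ≤ vdeg G v := by simpa [vdeg] using Nat.card_le_card_of_surjective f hf
  exact ⟨v, rfl, by omega⟩

end IsBColoring

lemma bChrom_eq {V : Type*} {G : SimpleGraph V} {n : ℕ} (C : V → Fin n) (hC : IsBColoring G C)
    (hle : ∀ k (C' : V → Fin k), IsBColoring G C' → k ≤ n) : bChrom G = n := by
  have hmem : n ∈ {k | ∃ C : V → Fin k, IsBColoring G C} := ⟨C, hC⟩
  have hbdd : n ∈ upperBounds {k | ∃ C : V → Fin k, IsBColoring G C} :=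
    fun k ⟨C', hC'⟩ => hle k C' hC'
  exact le_antisymm (csSup_le ⟨n, hmem⟩ hbdd) (le_csSup ⟨n, hbdd⟩ hmem)

namespace crownGraph

variable {n : ℕ} {i j : Fin n}

@[simp]
lemma adj_inl_inr : (crownGraph n).Adj (Sum.inl i) (Sum.inr j) ↔ i ≠ j := by
  simp [crownGraph]

@[simp]
lemma adj_inr_inl : (crownGraph n).Adj (Sum.inr i) (Sum.inl j) ↔ i ≠ j := by
  simp [crownGraph, eq_comm]

@[simp]
lemma not_adj_inl_inl : ¬ (crownGraph n).Adj (Sum.inl i) (Sum.inl j) := by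
  simp [crownGraph]

@[simp]
lemma not_adj_inr_inr : ¬ (crownGraph n).Adj (Sum.inr i) (Sum.inr j) := by
  simp [crownGraph]

noncomputable instance : (crownGraph n).LocallyFinite := fun _ => Fintype.ofFinite _

/-- Forgetting the side of a vertex is injective on each neighborhood. -/
lemma vdeg_le (v : Fin n ⊕ Fin n) : vdeg (crownGraph n) v ≤ n - 1 := by
  let f : {w // (crownGraph n).Adj v w} → {j : Fin n // j ≠ Sum.elim id id v} :=
    fun w => ⟨Sum.elim id id w.1, by
      obtain ⟨w, hw⟩ := w
      rcases v with v | v <;> rcases w with w | w <;> simp at hw ⊢ <;> exact Ne.symm hw⟩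
  have hf : Function.Injective f := by
    rintro ⟨w, hw⟩ ⟨w', hw'⟩ h
    have hval : Sum.elim id id w = Sum.elim id id w' := congrArg Subtype.val h
    rcases v with v | v <;> rcases w with w | w <;> rcases w' with w' | w' <;>
      simp at hw hw' hval ⊢ <;> exact hval
  simpa [vdeg] using Nat.card_le_card_of_injective f hf

lemma isBColoring_sumElim : IsBColoring (crownGraph n) (Sum.elim id id) := by
  refine ⟨?_, fun i => ⟨Sum.inl i, rfl, fun j hj => ⟨Sum.inr j, by simpa [eq_comm] using hj, rfl⟩⟩⟩
  rintro (v | v) (w | w) h <;> simp_all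

end crownGraph

lemma bChrom_crownGraph (n : ℕ) : bChrom (crownGraph n) = n := by
  refine bChrom_eq _ crownGraph.isBColoring_sumElim fun k C hC => ?_
  rcases Nat.eq_zero_or_pos k with rfl | hk
  · exact Nat.zero_le n
  obtain ⟨v, -, hv⟩ := hC.exists_le_vdeg_add_one ⟨0, hk⟩
  have hn : 0 < n := (Sum.elim id id v : Fin n).pos
  have := crownGraph.vdeg_le v
  omega

theorem stmt10_general (t : ℕ) : bChrom (crownGraph (t - 1)) = t - 1 :=
  bChrom_crownGraph (t - 1)

/-- For every `t ≥ 4`, the graph obtained from `K_{t-1,t-1}` by deleting a perfect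
matching has b-chromatic number exactly `t - 1`. -/
theorem stmt10 (t : ℕ) (ht : 4 ≤ t) : bChrom (crownGraph (t - 1)) = t - 1 :=
  stmt10_general t
end

section
/- For every finite tree T (a finite connected acyclic simple graph) with at least one vertex, b(T) ≥ m(T) − 1. -/
open SimpleGraph

/-- The parameter `m(G)`: the largest `k` such that `G` has `k` vertices each of degree at
least `k - 1` (equivalently, `max {i : d_i ≥ i - 1}` for the non-increasing degree
sequence `d_1 ≥ d_2 ≥ …`). -/
noncomputable def mParam {V : Type*} (G : SimpleGraph V) : ℕ :=
  sSup {k | ∃ s : Finset V, s.card = k ∧ ∀ v ∈ s, k - 1 ≤ vdeg G v}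


/-!
For `m(T) ≤ 3` a proper 2-coloring of the tree is already a b-coloring. Otherwise let
`k = m(T) - 1 ≥ 3`; there are `k` vertices of degree at least `k`, and since a tree has no
triangles they can be chosen so that no other vertex is adjacent to all of them. Call this set
`D`, root the tree at some `r ∈ D` and give the vertices of `D` distinct colors.

Each `u ∈ D` must see every color that it and its neighbours in `D` do not already carry, on
children outside `D`. Such a child is unusable for a color `γ` only if it is adjacent to the
vertex of `D` colored `γ`, and since a tree has no 4-cycles at most one child of `u` is unusable
for each `γ`. As `u` has at least `k` neighbours, Hall's condition holds, except in the tight case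
where the parent of `u` lies outside `D`; then the root's color is missing at `u` and usable on
every child of `u`, which restores it. Every remaining vertex is colored greedily from the root
downwards, avoiding its parent's color, the colors of its children in `D` and, when possible,
the root's color. A vertex could only run out of colors if all of `D \ {r}` were its children,
and then the color of its parent differs from that of `r`.
-/

open Finset
open scoped Classical

namespace SimpleGraph

variable {V : Type*} {G : SimpleGraph V}

lemma IsAcyclic.eq_of_adj_of_adj (hG : G.IsAcyclic) {u w x y : V} (huw : u ≠ w)
    (hux : G.Adj u x) (hxw : G.Adj x w) (huy : G.Adj u y) (hyw : G.Adj y w) : x = y := by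
  have hx : (Walk.cons hux (Walk.cons hxw .nil)).IsPath := by
    simp [Walk.isPath_def, hux.ne, hxw.ne, huw]
  have hy : (Walk.cons huy (Walk.cons hyw .nil)).IsPath := by
    simp [Walk.isPath_def, huy.ne, hyw.ne, huw]
  have := congrArg Subtype.val ((hG.subsingleton_path u w).elim ⟨_, hx⟩ ⟨_, hy⟩)
  simp only [Walk.cons.injEq] at this
  exact this.1

lemma vdeg_eq_degree [Fintype V] [DecidableRel G.Adj] (v : V) : vdeg G v = G.degree v := by
  rw [vdeg, ← card_neighborSet_eq_degree, ← Nat.card_eq_fintype_card]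
  rfl

end SimpleGraph

open SimpleGraph

structure PointedTree (V : Type*) where
  graph : SimpleGraph V
  isTree : graph.IsTree
  root : V

namespace PointedTree

variable {V : Type*} (t : PointedTree V) {u v p q x : V}

noncomputable def depth (v : V) : ℕ := t.graph.dist t.root v

lemma depth_root : t.depth t.root = 0 := dist_self

lemma depth_eq_or_eq_of_adj (h : t.graph.Adj u v) :
    t.depth u = t.depth v + 1 ∨ t.depth v = t.depth u + 1 :=
  t.isTree.dist_eq_dist_add_one_of_adj t.root h

lemma exists_adj_depth_add_one (hv : v ≠ t.root) :
    ∃ p, t.graph.Adj v p ∧ t.depth p + 1 = t.depth v := by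
  obtain ⟨W, hW⟩ := t.isTree.connected.exists_walk_length_eq_dist v t.root
  cases W with
  | nil => exact absurd rfl hv
  | cons h W =>
    refine ⟨_, h, ?_⟩
    have hle : t.depth _ ≤ W.length := dist_comm.trans_le (dist_le W)
    rw [Walk.length_cons, dist_comm] at hW
    rcases t.depth_eq_or_eq_of_adj h with h' | h' <;> simp only [depth] at * <;> omega

lemma eq_of_adj_of_depth_add_one (hp : t.graph.Adj v p) (hp' : t.depth p + 1 = t.depth v)
    (hq : t.graph.Adj v q) (hq' : t.depth q + 1 = t.depth v) : p = q := by
  have geodesic : ∀ p (hp : t.graph.Adj v p), t.depth p + 1 = t.depth v →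
      ∃ P : t.graph.Walk t.root p, (P.concat hp.symm).IsPath := by
    intro p hp hp'
    obtain ⟨P, hP, hPl⟩ := t.isTree.connected.exists_path_of_dist t.root p
    refine ⟨P, hP.concat (fun hv => ?_) hp.symm⟩
    have := (dist_le (P.takeUntil v hv)).trans (P.length_takeUntil_le_length hv)
    simp only [depth] at hp'
    omega
  obtain ⟨P, hP⟩ := geodesic p hp hp'
  obtain ⟨Q, hQ⟩ := geodesic q hq hq'
  obtain ⟨h, -⟩ := Walk.concat_inj (congrArg Subtype.val
    ((t.isTree.isAcyclic.subsingleton_path _ _).elim ⟨_, hP⟩ ⟨_, hQ⟩))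
  exact h

noncomputable def parent (v : V) : V :=
  if h : v = t.root then v else (t.exists_adj_depth_add_one h).choose

lemma parent_root : t.parent t.root = t.root := dif_pos rfl

lemma adj_parent (hv : v ≠ t.root) : t.graph.Adj v (t.parent v) := by
  rw [parent, dif_neg hv]
  exact (t.exists_adj_depth_add_one hv).choose_spec.1

lemma depth_parent (hv : v ≠ t.root) : t.depth (t.parent v) + 1 = t.depth v := by
  rw [parent, dif_neg hv]
  exact (t.exists_adj_depth_add_one hv).choose_spec.2

lemma parent_eq_of_adj (h : t.graph.Adj v p) (h' : t.depth p + 1 = t.depth v) :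
    t.parent v = p := by
  have hv : v ≠ t.root := by rintro rfl; rw [depth_root] at h'; omega
  exact t.eq_of_adj_of_depth_add_one (t.adj_parent hv) (t.depth_parent hv) h h'

lemma adj_iff : t.graph.Adj u v ↔
    (u ≠ t.root ∧ t.parent u = v) ∨ (v ≠ t.root ∧ t.parent v = u) := by
  constructor
  · intro h
    rcases t.depth_eq_or_eq_of_adj h with h' | h'
    · exact .inl ⟨by rintro rfl; rw [depth_root] at h'; omega, t.parent_eq_of_adj h h'.symm⟩
    · exact .inr ⟨by rintro rfl; rw [depth_root] at h'; omega,
        t.parent_eq_of_adj h.symm h'.symm⟩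
  · rintro (⟨hu, rfl⟩ | ⟨hv, rfl⟩)
    · exact t.adj_parent hu
    · exact (t.adj_parent hv).symm

variable [Fintype V]

noncomputable def children (u : V) : Finset V := (t.graph.neighborFinset u).erase (t.parent u)

lemma mem_children : x ∈ t.children u ↔ x ≠ t.root ∧ t.parent x = u := by
  rw [children, mem_erase, mem_neighborFinset, t.adj_iff]
  constructor
  · rintro ⟨hx, ⟨-, rfl⟩ | h⟩
    · exact absurd rfl hx
    · exact h
  · rintro ⟨hx, rfl⟩
    refine ⟨fun h => ?_, .inr ⟨hx, rfl⟩⟩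
    have := t.depth_parent hx
    by_cases hp : t.parent x = t.root
    · exact hx (h.trans (hp ▸ t.parent_root))
    · have := t.depth_parent hp
      rw [← h] at this
      omega

lemma adj_of_mem_children (h : x ∈ t.children u) : t.graph.Adj u x :=
  (mem_neighborFinset _ _ _).1 (mem_of_mem_erase h)

lemma parent_notMem_children : t.parent u ∉ t.children u := notMem_erase _ _

lemma root_notMem_children : t.root ∉ t.children u := fun h => (t.mem_children.1 h).1 rfl

lemma depth_of_mem_children (h : x ∈ t.children u) : t.depth x = t.depth u + 1 := by
  obtain ⟨hx, rfl⟩ := t.mem_children.1 h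
  exact (t.depth_parent hx).symm

end PointedTree

theorem Finset.exists_injOn_of_card_sdiff_le_one {ι α : Type*} [Nonempty α]
    {s : Finset ι} {F : Finset α} {A : ι → Finset α} (hA : ∀ i ∈ s, #(F \ A i) ≤ 1)
    (hcard : #s ≤ #F) (htight : #s = #F → ∃ i ∈ s, F ⊆ A i) :
    ∃ f : ι → α, Set.InjOn f s ∧ ∀ i ∈ s, f i ∈ A i := by
  have hall : ∀ u : Finset s, #u ≤ #(u.biUnion fun i => A i) := by
    intro u
    obtain rfl | ⟨i₀, hi₀⟩ := u.eq_empty_or_nonempty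
    · simp
    have hu : #u ≤ #s := (card_le_univ u).trans_eq (Fintype.card_coe s)
    have hF : #F ≤ #(u.biUnion fun i => A i) + 1 := calc
      #F ≤ #(F \ A i₀) + #(A i₀) := card_le_card_sdiff_add_card
      _ ≤ 1 + #(u.biUnion fun i => A i) :=
        add_le_add (hA i₀ i₀.2) (card_le_card (subset_biUnion_of_mem (fun i : s => A i) hi₀))
      _ = _ := add_comm _ _
    by_cases h : #u = #F
    · obtain ⟨i₁, hi₁, hF₁⟩ := htight (by omega)
      have hu_univ : u = univ := eq_univ_of_card u (by rw [Fintype.card_coe]; omega)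
      calc #u = #F := h
        _ ≤ #(u.biUnion fun i => A i) :=
          card_le_card (hF₁.trans (subset_biUnion_of_mem (fun i : s => A i)
            (hu_univ ▸ mem_univ (⟨i₁, hi₁⟩ : s))))
    · omega
  obtain ⟨f, hf, hfA⟩ := (all_card_le_biUnion_card_iff_exists_injective fun i : s => A i).1 hall
  refine ⟨fun i => if h : i ∈ s then f ⟨i, h⟩ else Classical.arbitrary α, ?_, ?_⟩
  · intro i hi j hj hij
    simp only [dif_pos (mem_coe.1 hi), dif_pos (mem_coe.1 hj)] at hij
    exact congrArg Subtype.val (hf hij)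
  · intro i hi
    simpa [dif_pos hi] using hfA ⟨i, hi⟩

noncomputable def Finset.choiceOutside {α : Type*} [Fintype α] (a : α) (s : Finset α) : α :=
  if h : ∃ b, b ∉ insert a s then h.choose else if h : ∃ b, b ∉ s then h.choose else a

lemma Finset.choiceOutside_notMem {α : Type*} [Fintype α] (a : α) {s : Finset α}
    (hs : #s < Fintype.card α) : choiceOutside a s ∉ s := by
  have hs' : ∃ b, b ∉ s := by
    obtain ⟨b, -, hb⟩ := exists_mem_notMem_of_card_lt_card (t := univ) hs
    exact ⟨b, hb⟩
  rw [choiceOutside]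
  split_ifs with h
  · exact fun hb => h.choose_spec (mem_insert_of_mem hb)
  · exact hs'.choose_spec

lemma Finset.choiceOutside_ne {α : Type*} [Fintype α] (a : α) {s : Finset α}
    (hs : #s + 1 < Fintype.card α) : choiceOutside a s ≠ a := by
  have h : ∃ b, b ∉ insert a s := by
    obtain ⟨b, -, hb⟩ := exists_mem_notMem_of_card_lt_card (t := univ)
      ((card_insert_le a s).trans_lt hs)
    exact ⟨b, hb⟩
  rw [choiceOutside, dif_pos h]
  exact fun hb => h.choose_spec (by rw [hb]; exact mem_insert_self _ _)

namespace SimpleGraph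

variable {V : Type*} {G : SimpleGraph V}

lemma exists_finset_forall_exists_not_adj [Fintype V] (hG : G.CliqueFree 3) {k : ℕ}
    (hk : 2 ≤ k) {s : Finset V} (hs : #s = k) (hdeg : ∀ v ∈ s, k ≤ G.degree v) :
    ∃ D : Finset V, #D = k ∧ (∀ v ∈ D, k ≤ G.degree v) ∧
      ∀ v ∉ D, ∃ w ∈ D, ¬ G.Adj v w := by
  by_cases hdom : ∀ v ∉ s, ∃ w ∈ s, ¬ G.Adj v w
  · exact ⟨s, hs, hdeg, hdom⟩
  push Not at hdom
  obtain ⟨v, hvs, hv⟩ := hdom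
  obtain ⟨w₀, hw₀⟩ : s.Nonempty := card_pos.1 (by omega)
  have hw₁ : (s.erase w₀).Nonempty := card_pos.1 (by rw [card_erase_of_mem hw₀]; omega)
  refine ⟨insert v (s.erase w₀), ?_, ?_, ?_⟩
  · rw [card_insert_of_notMem (fun h => hvs (mem_of_mem_erase h)), card_erase_of_mem hw₀]
    omega
  · intro x hx
    obtain rfl | hx := mem_insert.1 hx
    · calc k = #s := hs.symm
        _ ≤ #(G.neighborFinset x) :=
          card_le_card fun w hw => (mem_neighborFinset _ _ _).2 (hv w hw)
        _ = G.degree x := card_neighborFinset_eq_degree _ _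
    · exact hdeg x (mem_of_mem_erase hx)
  · intro x hx
    by_contra! hxD
    obtain ⟨w, hw⟩ := hw₁
    refine hG {x, v, w} (is3Clique_triple_iff.2 ⟨?_, ?_, ?_⟩)
    · exact hxD v (mem_insert_self _ _)
    · exact hxD w (mem_insert_of_mem hw)
    · exact hv w (mem_of_mem_erase hw)

lemma Coloring.isBColoring_of_adj (C : G.Coloring (Fin 2)) {a b : V} (hab : G.Adj a b) :
    IsBColoring G C := by
  refine ⟨fun v w h => C.valid h, fun i => ?_⟩
  have hne : C a ≠ C b := C.valid hab
  have other : ∀ x y j : Fin 2, x ≠ y → j ≠ x → j = y := by decide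
  by_cases hi : C a = i
  · exact ⟨a, hi, fun j hj => ⟨b, hab, (other _ _ _ hne (hi ▸ hj)).symm⟩⟩
  · have hb : C b = i := (other _ _ _ hne (Ne.symm hi)).symm
    exact ⟨b, hb, fun j hj => ⟨a, hab.symm, (other _ _ _ hne.symm (hb ▸ hj)).symm⟩⟩

lemma _root_.IsBColoring.le_bChrom [Finite V] {k : ℕ} {C : V → Fin k} (hC : IsBColoring G C) :
    k ≤ bChrom G := by
  have : Fintype V := Fintype.ofFinite V
  refine le_csSup ⟨Fintype.card V, ?_⟩ ⟨C, hC⟩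
  rintro k ⟨C, hC⟩
  simpa using Fintype.card_le_of_surjective C fun i => (hC.2 i).imp fun v hv => hv.1

lemma exists_finset_card_eq_mParam [Fintype V] :
    ∃ s : Finset V, #s = mParam G ∧ ∀ v ∈ s, mParam G - 1 ≤ vdeg G v := by
  refine Nat.sSup_mem (s := {k | ∃ s : Finset V, #s = k ∧ ∀ v ∈ s, k - 1 ≤ vdeg G v})
    ⟨0, ∅, by simp⟩ ⟨Fintype.card V, ?_⟩
  rintro k ⟨s, rfl, -⟩
  exact card_le_univ s

end SimpleGraph

/-- The data of the construction: `D` becomes the set of b-vertices, `c` numbers it by the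
colors, and the tree is rooted inside `D`. -/
structure BColoringSetup (V : Type*) [Fintype V] extends PointedTree V where
  k : ℕ
  three_le_k : 3 ≤ k
  D : Finset V
  card_D : #D = k
  le_degree : ∀ v ∈ D, k ≤ graph.degree v
  exists_not_adj : ∀ v ∉ D, ∃ w ∈ D, ¬ graph.Adj v w
  root_mem : root ∈ D
  c : V → Fin k
  injOn_c : Set.InjOn c D

namespace BColoringSetup

variable {V : Type*} [Fintype V] (s : BColoringSetup V) {u v w x : V} {γ : Fin s.k}

instance : NeZero s.k := ⟨by have := s.three_le_k; omega⟩

lemma c_eq_c_iff (hv : v ∈ s.D) (hw : w ∈ s.D) : s.c v = s.c w ↔ v = w :=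
  s.injOn_c.eq_iff hv hw

lemma ne_root_of_notMem (hv : v ∉ s.D) : v ≠ s.root := fun h => hv (h ▸ s.root_mem)

noncomputable def missingColors (u : V) : Finset (Fin s.k) :=
  (insert (s.c u) ((s.graph.neighborFinset u ∩ s.D).image s.c))ᶜ

noncomputable def admissible (u : V) (γ : Fin s.k) : Finset V :=
  {x ∈ s.children u \ s.D | ∀ w ∈ s.D, s.graph.Adj x w → s.c w ≠ γ}

lemma ne_c_of_mem_missingColors (hγ : γ ∈ s.missingColors u) : γ ≠ s.c u := by
  rintro rfl
  exact mem_compl.1 hγ (mem_insert_self _ _)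

lemma card_missingColors (hu : u ∈ s.D) :
    #(s.missingColors u) + #(s.graph.neighborFinset u ∩ s.D) + 1 = s.k := by
  have hinj : Set.InjOn s.c (s.graph.neighborFinset u ∩ s.D : Finset V) :=
    s.injOn_c.mono fun w hw => (mem_inter.1 hw).2
  have hu' : s.c u ∉ (s.graph.neighborFinset u ∩ s.D).image s.c := by
    simp only [mem_image, mem_inter, mem_neighborFinset]
    rintro ⟨w, ⟨huw, hw⟩, hcw⟩
    exact huw.ne ((s.c_eq_c_iff hw hu).1 hcw).symm
  have := card_compl_add_card (insert (s.c u) ((s.graph.neighborFinset u ∩ s.D).image s.c))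
  rw [card_insert_of_notMem hu', card_image_of_injOn hinj, Fintype.card_fin] at this
  rw [missingColors]
  omega

lemma card_missingColors_le (hu : u ∈ s.D) : #(s.missingColors u) ≤ #(s.children u \ s.D) ∧
    (#(s.missingColors u) = #(s.children u \ s.D) → u ≠ s.root ∧ s.parent u ∉ s.D) := by
  have hN : #(s.missingColors u) + 1 ≤ #(s.graph.neighborFinset u \ s.D) := by
    have := card_sdiff_add_card_inter (s.graph.neighborFinset u) s.D
    rw [card_neighborFinset_eq_degree] at this
    have := s.card_missingColors hu
    have := s.le_degree u hu
    omega
  have hch : s.children u \ s.D = (s.graph.neighborFinset u \ s.D).erase (s.parent u) := by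
    ext x
    simp only [PointedTree.children, mem_sdiff, mem_erase]
    tauto
  rw [hch]
  by_cases hp : s.parent u ∈ s.graph.neighborFinset u \ s.D
  · rw [card_erase_of_mem hp]
    obtain ⟨hadj, hpD⟩ := mem_sdiff.1 hp
    refine ⟨by omega, fun _ => ⟨fun hur => ?_, hpD⟩⟩
    rw [hur, s.parent_root, mem_neighborFinset] at hadj
    exact hadj.ne rfl
  · rw [erase_eq_of_notMem hp]
    omega

lemma card_sdiff_admissible_le_one (hγ : γ ∈ s.missingColors u) :
    #((s.children u \ s.D) \ s.admissible u γ) ≤ 1 := by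
  have witness : ∀ x ∈ (s.children u \ s.D) \ s.admissible u γ,
      s.graph.Adj u x ∧ ∃ w ∈ s.D, s.graph.Adj x w ∧ s.c w = γ := by
    intro x hx
    simp only [admissible, mem_sdiff, mem_filter, not_and, not_forall, not_not] at hx
    obtain ⟨w, hw, hxw, hcw⟩ := hx.2 hx.1
    exact ⟨s.adj_of_mem_children hx.1.1, w, hw, hxw, hcw⟩
  refine card_le_one.2 fun x hx y hy => ?_
  obtain ⟨hux, w, hw, hxw, rfl⟩ := witness x hx
  obtain ⟨huy, w', hw', hyw', hcw'⟩ := witness y hy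
  rw [(s.c_eq_c_iff hw' hw).1 hcw'] at hyw'
  have huw : u ≠ w := fun h => s.ne_c_of_mem_missingColors hγ (h ▸ rfl)
  exact s.isTree.isAcyclic.eq_of_adj_of_adj huw hux hxw huy hyw'

lemma c_root_mem_missingColors (hu : u ∈ s.D) (hur : u ≠ s.root) (hp : s.parent u ∉ s.D) :
    s.c s.root ∈ s.missingColors u := by
  simp only [missingColors, mem_compl, mem_insert, mem_image, mem_inter, mem_neighborFinset, not_or,
    not_exists, not_and]
  refine ⟨fun h => hur ((s.c_eq_c_iff s.root_mem hu).1 h).symm, fun w ⟨huw, hw⟩ hcw => ?_⟩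
  obtain rfl := (s.c_eq_c_iff hw s.root_mem).1 hcw
  rcases s.adj_iff.1 huw with ⟨-, h⟩ | ⟨h, -⟩
  · exact hp (h ▸ s.root_mem)
  · exact h rfl

lemma children_sdiff_subset_admissible_c_root (hur : u ≠ s.root) :
    s.children u \ s.D ⊆ s.admissible u (s.c s.root) := by
  intro x hx
  refine mem_filter.2 ⟨hx, fun w hw hxw hcw => ?_⟩
  obtain rfl := (s.c_eq_c_iff hw s.root_mem).1 hcw
  obtain ⟨hx, rfl⟩ := s.mem_children.1 (mem_sdiff.1 hx).1
  rcases s.adj_iff.1 hxw with ⟨-, h⟩ | ⟨h, -⟩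
  · exact hur h
  · exact h rfl

lemma exists_matching (hu : u ∈ s.D) :
    ∃ f : Fin s.k → V, Set.InjOn f (s.missingColors u) ∧
      ∀ γ ∈ s.missingColors u, f γ ∈ s.admissible u γ := by
  have : Nonempty V := ⟨u⟩
  refine exists_injOn_of_card_sdiff_le_one (fun γ hγ => s.card_sdiff_admissible_le_one hγ)
    (s.card_missingColors_le hu).1 fun h => ?_
  obtain ⟨hur, hp⟩ := (s.card_missingColors_le hu).2 h
  exact ⟨_, s.c_root_mem_missingColors hu hur hp, s.children_sdiff_subset_admissible_c_root hur⟩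

noncomputable def matching (u : V) : Fin s.k → V :=
  if h : u ∈ s.D then (s.exists_matching h).choose else fun _ => u

lemma injOn_matching (hu : u ∈ s.D) : Set.InjOn (s.matching u) (s.missingColors u) := by
  rw [matching, dif_pos hu]
  exact (s.exists_matching hu).choose_spec.1

lemma matching_mem_admissible (hu : u ∈ s.D) (hγ : γ ∈ s.missingColors u) :
    s.matching u γ ∈ s.admissible u γ := by
  rw [matching, dif_pos hu]
  exact (s.exists_matching hu).choose_spec.2 γ hγ

def IsMatched (x : V) : Prop :=
  s.parent x ∈ s.D ∧ ∃ γ ∈ s.missingColors (s.parent x), s.matching (s.parent x) γ = x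

noncomputable def matchColor (x : V) : Fin s.k :=
  Function.invFunOn (s.matching (s.parent x)) (s.missingColors (s.parent x)) x

section

variable {s}

lemma IsMatched.matchColor_mem_missingColors (h : s.IsMatched x) :
    s.matchColor x ∈ s.missingColors (s.parent x) :=
  (Function.invFunOn_pos h.2).1

lemma IsMatched.mem_admissible (h : s.IsMatched x) :
    x ∈ s.admissible (s.parent x) (s.matchColor x) := by
  have := s.matching_mem_admissible h.1 h.matchColor_mem_missingColors
  rwa [matchColor, Function.invFunOn_eq h.2] at this

lemma IsMatched.notMem (h : s.IsMatched x) : x ∉ s.D :=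
  (mem_sdiff.1 (mem_filter.1 h.mem_admissible).1).2

lemma IsMatched.matchColor_ne_c (h : s.IsMatched x) (hw : w ∈ s.D) (hxw : s.graph.Adj x w) :
    s.matchColor x ≠ s.c w :=
  ((mem_filter.1 h.mem_admissible).2 w hw hxw).symm

end

lemma isMatched_matching (hu : u ∈ s.D) (hγ : γ ∈ s.missingColors u) :
    s.IsMatched (s.matching u γ) ∧ s.matchColor (s.matching u γ) = γ := by
  have hpar : s.parent (s.matching u γ) = u :=
    (s.mem_children.1 (mem_sdiff.1 (mem_filter.1 (s.matching_mem_admissible hu hγ)).1).1).2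
  refine ⟨⟨by rw [hpar]; exact hu, γ, by rw [hpar]; exact hγ, by rw [hpar]⟩, ?_⟩
  rw [matchColor, hpar]
  exact (s.injOn_matching hu).leftInvOn_invFunOn hγ

-- Avoiding the root's color whenever possible is what `color_parent_ne_c_root` relies on.
noncomputable def color (v : V) : Fin s.k :=
  if v ∈ s.D then s.c v
  else if s.IsMatched v then s.matchColor v
  else choiceOutside (s.c s.root) (insert (color (s.parent v)) ((s.D ∩ s.children v).image s.c))
termination_by s.depth v
decreasing_by
  have := s.depth_parent (s.ne_root_of_notMem ‹v ∉ s.D›)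
  omega

noncomputable def forbidden (v : V) : Finset (Fin s.k) :=
  insert (s.color (s.parent v)) ((s.D ∩ s.children v).image s.c)

lemma color_of_mem (hv : v ∈ s.D) : s.color v = s.c v := by
  rw [color, if_pos hv]

lemma color_of_isMatched (h : s.IsMatched x) : s.color x = s.matchColor x := by
  rw [color, if_neg h.notMem, if_pos h]

lemma color_of_not_isMatched (hv : v ∉ s.D) (hm : ¬ s.IsMatched v) :
    s.color v = choiceOutside (s.c s.root) (s.forbidden v) := by
  rw [color, if_neg hv, if_neg hm, forbidden]

lemma inter_children_subset_erase_root : s.D ∩ s.children v ⊆ s.D.erase s.root :=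
  fun _ hw => mem_erase.2 ⟨ne_of_mem_of_not_mem (mem_inter.1 hw).2 s.root_notMem_children,
    (mem_inter.1 hw).1⟩

-- The parent `p` of `v` lies outside `D` and is not the root. If `p` is matched, then its parent
-- is the root; otherwise `p` has no children in `D` and, as `3 ≤ k`, avoids the root's color.
lemma color_parent_ne_c_root (hv : v ∉ s.D) (hsub : s.D.erase s.root ⊆ s.children v) :
    s.color (s.parent v) ≠ s.c s.root := by
  have hvr := s.ne_root_of_notMem hv
  have hvp := s.adj_parent hvr
  have hdepth := s.depth_parent hvr
  set p := s.parent v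
  have hpr : p ≠ s.root := by
    intro hpr
    obtain ⟨w, hw, hvw⟩ := s.exists_not_adj v hv
    by_cases hwr : w = s.root
    · exact hvw (hwr ▸ hpr ▸ hvp)
    · exact hvw (s.adj_of_mem_children (hsub (mem_erase.2 ⟨hwr, hw⟩)))
  have hpD : p ∉ s.D := fun hpD =>
    s.parent_notMem_children (hsub (mem_erase.2 ⟨hpr, hpD⟩))
  by_cases hm : s.IsMatched p
  · have hpp : s.parent p = s.root := by
      by_contra hpp
      have := s.depth_of_mem_children (hsub (mem_erase.2 ⟨hpp, hm.1⟩))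
      have := s.depth_parent hpr
      omega
    rw [s.color_of_isMatched hm]
    exact hm.matchColor_ne_c s.root_mem (hpp ▸ s.adj_parent hpr)
  · have hempty : s.D ∩ s.children p = ∅ := by
      refine eq_empty_of_forall_notMem fun w hw => ?_
      obtain ⟨hw, hwp⟩ := mem_inter.1 hw
      have hwv := hsub (mem_erase.2 ⟨(s.mem_children.1 hwp).1, hw⟩)
      have hpv : p = v := (s.mem_children.1 hwp).2.symm.trans (s.mem_children.1 hwv).2
      exact hvp.ne hpv.symm
    rw [s.color_of_not_isMatched hpD hm]
    refine choiceOutside_ne _ ?_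
    have := s.three_le_k
    simp only [forbidden, hempty, image_empty, Fintype.card_fin, insert_empty, card_singleton]
    omega

lemma card_forbidden_lt (hv : v ∉ s.D) : #(s.forbidden v) < s.k := by
  have hsubset := s.inter_children_subset_erase_root (v := v)
  have hk : #(s.D.erase s.root) + 1 = s.k := by
    rw [card_erase_of_mem s.root_mem, s.card_D]
    have := s.three_le_k
    omega
  by_cases hsub : s.D.erase s.root ⊆ s.children v
  · have hne := s.color_parent_ne_c_root hv hsub
    have : s.forbidden v ⊆ univ.erase (s.c s.root) := by
      refine insert_subset (mem_erase.2 ⟨hne, mem_univ _⟩) fun γ hγ => ?_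
      obtain ⟨w, hw, rfl⟩ := mem_image.1 hγ
      obtain ⟨hwr, hwD⟩ := mem_erase.1 (hsubset hw)
      exact mem_erase.2 ⟨fun h => hwr ((s.c_eq_c_iff hwD s.root_mem).1 h), mem_univ _⟩
    have := card_le_card this
    rw [card_erase_of_mem (mem_univ _), card_univ, Fintype.card_fin] at this
    omega
  · have hlt : #(s.D ∩ s.children v) < #(s.D.erase s.root) :=
      card_lt_card ⟨hsubset, fun h => hsub fun w hw => (mem_inter.1 (h hw)).2⟩
    have : #(s.forbidden v) ≤ #(s.D ∩ s.children v) + 1 :=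
      (card_insert_le _ _).trans (Nat.add_le_add_right card_image_le 1)
    omega

lemma color_notMem_forbidden (hv : v ∉ s.D) (hm : ¬ s.IsMatched v) :
    s.color v ∉ s.forbidden v := by
  rw [s.color_of_not_isMatched hv hm]
  exact choiceOutside_notMem _ (by rw [Fintype.card_fin]; exact s.card_forbidden_lt hv)

lemma color_ne_color_parent (hx : x ≠ s.root) : s.color x ≠ s.color (s.parent x) := by
  have hadj := s.adj_parent hx
  by_cases hxD : x ∈ s.D
  · rw [s.color_of_mem hxD]
    by_cases hpD : s.parent x ∈ s.D
    · rw [s.color_of_mem hpD]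
      exact fun h => hadj.ne ((s.c_eq_c_iff hxD hpD).1 h)
    by_cases hm : s.IsMatched (s.parent x)
    · rw [s.color_of_isMatched hm]
      exact (hm.matchColor_ne_c hxD hadj.symm).symm
    · have hx' : x ∈ s.D ∩ s.children (s.parent x) :=
        mem_inter.2 ⟨hxD, s.mem_children.2 ⟨hx, rfl⟩⟩
      exact fun h => s.color_notMem_forbidden hpD hm
        (h ▸ mem_insert_of_mem (mem_image_of_mem _ hx'))
  by_cases hm : s.IsMatched x
  · rw [s.color_of_isMatched hm, s.color_of_mem hm.1]
    exact s.ne_c_of_mem_missingColors hm.matchColor_mem_missingColors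
  · exact fun h => s.color_notMem_forbidden hxD hm (h ▸ mem_insert_self _ _)

lemma exists_adj_color_eq (hu : u ∈ s.D) (hγ : γ ≠ s.c u) :
    ∃ x, s.graph.Adj u x ∧ s.color x = γ := by
  by_cases hn : γ ∈ s.missingColors u
  · obtain ⟨hm, hcol⟩ := s.isMatched_matching hu hn
    refine ⟨_, ?_, (s.color_of_isMatched hm).trans hcol⟩
    exact s.adj_of_mem_children (mem_sdiff.1 (mem_filter.1 (s.matching_mem_admissible hu hn)).1).1
  · simp only [missingColors, mem_compl, not_not, mem_insert, hγ, false_or, mem_image, mem_inter,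
      mem_neighborFinset] at hn
    obtain ⟨w, ⟨huw, hw⟩, rfl⟩ := hn
    exact ⟨w, huw, s.color_of_mem hw⟩

lemma isBColoring : IsBColoring s.graph s.color := by
  refine ⟨fun a b hab => ?_, fun i => ?_⟩
  · rcases s.adj_iff.1 hab with ⟨ha, rfl⟩ | ⟨hb, rfl⟩
    · exact s.color_ne_color_parent ha
    · exact (s.color_ne_color_parent hb).symm
  · have himage : s.D.image s.c = univ := eq_univ_of_card _ (by
      rw [card_image_of_injOn s.injOn_c, s.card_D, Fintype.card_fin])
    obtain ⟨v, hv, rfl⟩ := mem_image.1 (himage ▸ mem_univ i)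
    exact ⟨v, s.color_of_mem hv, fun j hj => s.exists_adj_color_eq hv hj⟩

end BColoringSetup

theorem SimpleGraph.IsTree.exists_isBColoring {V : Type*} [Fintype V] {T : SimpleGraph V}
    (hT : T.IsTree) {k : ℕ} (hk : 3 ≤ k) {s : Finset V} (hs : #s = k)
    (hdeg : ∀ v ∈ s, k ≤ T.degree v) : ∃ C : V → Fin k, IsBColoring T C := by
  obtain ⟨D, hD, hDdeg, hDdom⟩ :=
    exists_finset_forall_exists_not_adj (hT.isAcyclic.cliqueFree le_rfl) (by omega) hs hdeg
  obtain ⟨r, hr⟩ : D.Nonempty := card_pos.1 (by omega)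
  let e : D ≃ Fin k := D.equivFin.trans (finCongr hD)
  let c : V → Fin k := fun v => if h : v ∈ D then e ⟨v, h⟩ else e ⟨r, hr⟩
  have hc : Set.InjOn c D := fun v hv w hw hvw => by
    simpa [c, dif_pos (mem_coe.1 hv), dif_pos (mem_coe.1 hw)] using hvw
  exact ⟨_, BColoringSetup.isBColoring
    ⟨⟨T, hT, r⟩, k, hk, D, hD, hDdeg, hDdom, hr, c, hc⟩⟩

theorem stmt16_general {V : Type*} [Fintype V] (T : SimpleGraph V) (hT : T.IsTree) :
    mParam T - 1 ≤ bChrom T := by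
  obtain ⟨s, hs, hdeg⟩ := exists_finset_card_eq_mParam (G := T)
  simp only [vdeg_eq_degree] at hdeg
  by_cases hm : mParam T ≤ 1
  · omega
  obtain ⟨v, hv⟩ : s.Nonempty := card_pos.1 (by omega)
  obtain ⟨w, hvw⟩ := (T.degree_pos_iff_exists_adj v).1 (by have := hdeg v hv; omega)
  have htwo : 2 ≤ bChrom T := (hT.coloringTwo.isBColoring_of_adj hvw).le_bChrom
  by_cases hm' : mParam T ≤ 3
  · omega
  obtain ⟨t, hts, ht⟩ := exists_subset_card_eq (show mParam T - 1 ≤ #s by omega)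
  obtain ⟨C, hC⟩ := hT.exists_isBColoring (by omega) ht fun v hv => by
    have := hdeg v (hts hv)
    omega
  exact hC.le_bChrom

/-- For every finite tree `T` with at least one vertex, `b(T) ≥ m(T) - 1`. -/
theorem stmt16 {V : Type*} [Fintype V] [Nonempty V] (T : SimpleGraph V) (hT : T.IsTree) :
    mParam T - 1 ≤ bChrom T :=
  stmt16_general T hT
end
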